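/- arXiv:2208.01900 — 9 statements merged into one kernel-verified Lean document; each statement's English description precedes it below -/
import Mathlib

section
/- Let G be a finite cyclic group, H ≠ {e} a subgroup, and x ∈ H, y ∈ G \ H non-identity elements with the same set of prime divisors of their orders. Then deg(x) > deg(y) in the generalized non-coprime graph Γ_{G,H}. -/
/-- The generalized non-coprime graph of a group `G` with respect to a subgroup `H`:
vertices are the non-identity elements of `G`, and distinct vertices `a`, `b` are
adjacent iff `gcd(|a|,|b|) ≠ 1` and `a ∈ H` or `b ∈ H`. -/
def genNonCoprimeGraph (G : Type*) [Group G] (H : Subgroup G) :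
    SimpleGraph {x : G // x ≠ 1} where
  Adj a b := a ≠ b ∧ Nat.gcd (orderOf (a : G)) (orderOf (b : G)) ≠ 1 ∧
    ((a : G) ∈ H ∨ (b : G) ∈ H)
  symm := by
    constructor
    intro a b h
    exact ⟨h.1.symm, by rw [Nat.gcd_comm]; exact h.2.1, h.2.2.symm⟩
  loopless := by
    constructor
    intro a h
    exact h.1 rfl


/-!
Since `y ∉ H`, every neighbour `z` of `y` lies in `H` and `|z|` shares a prime with `|y|`, hence
with `|x|`; so every neighbour of `y` other than `x` is a neighbour of `x`, and so is `y` itself.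
This accounts for `deg y` neighbours of `x`, and `y⁻¹` is one more: it is adjacent to `x` but, lying
outside `H`, not to `y`. Finally `y⁻¹ ≠ y`, since an involution of a cyclic group lies in every
subgroup of even order, in particular in `⟨x⟩ ≤ H`.
-/

theorem Nat.not_coprime_of_forall_prime_dvd {a b n : ℕ} (h : ∀ p, p.Prime → p ∣ a → p ∣ b)
    (ha : ¬ a.Coprime n) : ¬ b.Coprime n := by
  obtain ⟨p, hp, hpa, hpn⟩ := Nat.Prime.not_coprime_iff_dvd.mp ha
  exact Nat.Prime.not_coprime_iff_dvd.mpr ⟨p, hp, h p hp hpa, hpn⟩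

theorem IsCyclic.mem_zpowers_of_orderOf_dvd {G : Type*} [Group G] [Fintype G] [IsCyclic G]
    {x y : G} (h : orderOf y ∣ orderOf x) : y ∈ Subgroup.zpowers x := by
  classical
  set d := orderOf y
  set w := x ^ (orderOf x / d)
  have hw : orderOf w = d := orderOf_pow_orderOf_div (orderOf_pos x).ne' h
  -- `zpowers w` consists of `d` solutions of `a ^ d = 1`, and a cyclic group has at most `d`.
  have hsub : (Subgroup.zpowers w : Set G).toFinset ⊆ Finset.univ.filter (· ^ d = 1) := by
    intro a ha
    simpa [← hw, orderOf_dvd_iff_pow_eq_one] using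
      orderOf_dvd_of_mem_zpowers (Set.mem_toFinset.mp ha)
  have heq := Finset.eq_of_subset_of_card_le hsub <| by
    rw [← Set.ncard_eq_toFinset_card', ← Nat.card_coe_set_eq, SetLike.coe_sort_coe,
      Nat.card_zpowers, hw]
    exact IsCyclic.card_pow_eq_one_le (orderOf_pos y)
  have hy : y ∈ (Subgroup.zpowers w : Set G).toFinset := by
    simp [heq, d, pow_orderOf_eq_one]
  exact Subgroup.zpowers_le_of_mem (Subgroup.npow_mem_zpowers x _) (Set.mem_toFinset.mp hy)

theorem IsCyclic.inv_ne_self_of_notMem {G : Type*} [Group G] [Fintype G] [IsCyclic G]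
    {H : Subgroup G} {x y : G} (hx : x ∈ H) (hy : y ∉ H)
    (hprime : ∀ p, p.Prime → p ∣ orderOf y → p ∣ orderOf x) : y⁻¹ ≠ y := by
  intro hinv
  have hy1 : y ≠ 1 := fun h => hy (h ▸ H.one_mem)
  have hy2 : orderOf y = 2 :=
    orderOf_eq_prime (by rw [sq]; exact inv_eq_iff_mul_eq_one.mp hinv) hy1
  have hdvd : orderOf y ∣ orderOf x := hy2 ▸ hprime 2 Nat.prime_two (hy2 ▸ dvd_rfl)
  exact hy (Subgroup.zpowers_le_of_mem hx (mem_zpowers_of_orderOf_dvd hdvd))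

namespace genNonCoprimeGraph

variable {G : Type*} [Group G] {H : Subgroup G} {a b c : {g : G // g ≠ 1}}

theorem adj_of_mem (hab : a ≠ b) (hcop : ¬ (orderOf (a : G)).Coprime (orderOf (b : G)))
    (ha : (a : G) ∈ H) : (genNonCoprimeGraph G H).Adj a b :=
  ⟨hab, hcop, Or.inl ha⟩

theorem not_coprime_of_adj (h : (genNonCoprimeGraph G H).Adj a b) :
    ¬ (orderOf (a : G)).Coprime (orderOf (b : G)) :=
  h.2.1

theorem mem_of_adj_of_notMem (h : (genNonCoprimeGraph G H).Adj a b) (ha : (a : G) ∉ H) :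
    (b : G) ∈ H :=
  h.2.2.resolve_left ha

theorem adj_of_adj_of_forall_prime_dvd (ha : (a : G) ∈ H)
    (hprime : ∀ p, p.Prime → p ∣ orderOf (b : G) → p ∣ orderOf (a : G))
    (hbc : (genNonCoprimeGraph G H).Adj b c) (hca : c ≠ a) : (genNonCoprimeGraph G H).Adj a c :=
  adj_of_mem hca.symm (Nat.not_coprime_of_forall_prime_dvd hprime (not_coprime_of_adj hbc)) ha

end genNonCoprimeGraph

open genNonCoprimeGraph in
theorem degree_lt_of_mem_notMem_general {G : Type*} [Group G] [Fintype G]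
    (hG : IsCyclic G) (H : Subgroup G)
    (x y : {g : G // g ≠ 1})
    (hx : (x : G) ∈ H) (hy : (y : G) ∉ H)
    (hθ : {p : ℕ | p.Prime ∧ p ∣ orderOf (x : G)} =
          {p : ℕ | p.Prime ∧ p ∣ orderOf (y : G)}) :
    ((genNonCoprimeGraph G H).neighborSet y).ncard <
      ((genNonCoprimeGraph G H).neighborSet x).ncard := by
  set Γ := genNonCoprimeGraph G H
  have hprime : ∀ p, p.Prime → p ∣ orderOf (y : G) → p ∣ orderOf (x : G) :=
    fun p hp hpy => ((Set.ext_iff.mp hθ p).mpr ⟨hp, hpy⟩).2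
  have hxy : Γ.Adj x y := adj_of_mem (fun h => hy (h ▸ hx))
    (Nat.not_coprime_of_forall_prime_dvd hprime (by simpa [Nat.coprime_self] using y.2)) hx
  set y' : {g : G // g ≠ 1} := ⟨(y : G)⁻¹, inv_ne_one.mpr y.2⟩
  have hy' : (y' : G) ∉ H := fun h => hy (by simpa [y'] using H.inv_mem h)
  have hy'y : y' ≠ y := fun h => hG.inv_ne_self_of_notMem hx hy hprime (congrArg Subtype.val h)
  have hsub : insert y' (insert y (Γ.neighborSet y \ {x})) ⊆ Γ.neighborSet x := by
    rintro z (rfl | rfl | ⟨hyz, hzx⟩)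
    · exact adj_of_mem (fun h => hy' (h ▸ hx)) (by simpa [y'] using not_coprime_of_adj hxy) hx
    · exact hxy
    · exact adj_of_adj_of_forall_prime_dvd hx hprime hyz hzx
  have hy'N : y' ∉ insert y (Γ.neighborSet y \ {x}) := by
    rintro (h | ⟨hyy', -⟩)
    · exact hy'y h
    · exact hy' (mem_of_adj_of_notMem hyy' hy)
  calc (Γ.neighborSet y).ncard
      = (insert y (Γ.neighborSet y \ {x})).ncard :=
        (Set.ncard_exchange Γ.notMem_neighborSet_self hxy.symm).symm
    _ < (insert y' (insert y (Γ.neighborSet y \ {x}))).ncard := by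
        rw [Set.ncard_insert_of_notMem hy'N]
        exact Nat.lt_succ_self _
    _ ≤ (Γ.neighborSet x).ncard := Set.ncard_le_ncard hsub

theorem degree_lt_of_mem_notMem {G : Type*} [Group G] [Fintype G]
    (hG : IsCyclic G) (H : Subgroup G) (hH : H ≠ ⊥)
    (x y : {g : G // g ≠ 1}) (hxy : x ≠ y)
    (hx : (x : G) ∈ H) (hy : (y : G) ∉ H)
    (hθ : {p : ℕ | p.Prime ∧ p ∣ orderOf (x : G)} =
          {p : ℕ | p.Prime ∧ p ∣ orderOf (y : G)}) :
    ((genNonCoprimeGraph G H).neighborSet y).ncard <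
      ((genNonCoprimeGraph G H).neighborSet x).ncard :=
  degree_lt_of_mem_notMem_general hG H x y hx hy hθ
end

section
/- Let G be a finite cyclic group of order n ≥ 3 and H ≠ {e} a subgroup. For x ∈ H \ {e}, the degree of x in the generalized non-coprime graph Γ_{G,H} equals (∑_{d | n, d > 1, gcd(d,|x|) > 1} φ(d)) − 1, where φ is Euler's totient function. -/
open Finset

theorem IsCyclic.card_filter_orderOf {G : Type*} [Group G] [Fintype G] [IsCyclic G]
    (p : ℕ → Prop) [DecidablePred p] :
    #{y : G | p (orderOf y)} = ∑ d ∈ (Fintype.card G).divisors with p d, d.totient := by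
  classical
  rw [card_eq_sum_card_fiberwise (f := orderOf) (t := (Fintype.card G).divisors.filter p)]
  · refine sum_congr rfl fun d hd => ?_
    rw [← IsCyclic.card_orderOf_eq_totient (Nat.dvd_of_mem_divisors (mem_filter.1 hd).1)]
    congr 1
    ext y
    simp only [mem_filter, mem_univ, true_and, and_iff_right_iff_imp]
    rintro rfl
    exact (mem_filter.1 hd).2
  · intro y hy
    simp only [coe_filter, mem_univ, true_and, Set.mem_ofPred_eq, Nat.mem_divisors] at hy ⊢
    exact ⟨⟨orderOf_dvd_card, Fintype.card_ne_zero⟩, hy⟩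

theorem genNonCoprimeGraph_adj_iff_of_mem {G : Type*} [Group G] {H : Subgroup G}
    {a b : {x : G // x ≠ 1}} (ha : (a : G) ∈ H) :
    (genNonCoprimeGraph G H).Adj a b ↔
      a ≠ b ∧ Nat.gcd (orderOf (a : G)) (orderOf (b : G)) ≠ 1 := by
  simp [genNonCoprimeGraph, ha]

theorem ncard_neighborSet_genNonCoprimeGraph_of_mem {G : Type*} [Group G] {H : Subgroup G}
    {x : {g : G // g ≠ 1}} (hx : (x : G) ∈ H) :
    ((genNonCoprimeGraph G H).neighborSet x).ncard =
      {y : G | Nat.gcd (orderOf y) (orderOf (x : G)) ≠ 1}.ncard - 1 := by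
  have hx_order : Nat.gcd (orderOf (x : G)) (orderOf (x : G)) ≠ 1 := by
    simpa only [Nat.gcd_self, Ne, orderOf_eq_one_iff] using x.2
  have himage : Subtype.val '' (genNonCoprimeGraph G H).neighborSet x =
      {y : G | Nat.gcd (orderOf y) (orderOf (x : G)) ≠ 1} \ {(x : G)} := by
    ext y
    simp only [Set.mem_image, SimpleGraph.mem_neighborSet, genNonCoprimeGraph_adj_iff_of_mem hx,
      Set.mem_sdiff, Set.mem_ofPred_eq, Set.mem_singleton_iff, Nat.gcd_comm (orderOf y)]
    constructor
    · rintro ⟨y, ⟨hne, hgcd⟩, rfl⟩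
      exact ⟨hgcd, fun h => hne (Subtype.ext h.symm)⟩
    · rintro ⟨hgcd, hne⟩
      have hy : y ≠ 1 := by
        rintro rfl
        simp at hgcd
      exact ⟨⟨y, hy⟩, ⟨fun h => hne (congrArg Subtype.val h).symm, hgcd⟩, rfl⟩
  rw [← Set.ncard_image_of_injective _ Subtype.val_injective, himage,
    Set.ncard_sdiff_singleton_of_mem hx_order]

theorem degree_of_mem_eq_general {G : Type*} [Group G] [Fintype G]
    (hG : IsCyclic G)
    (H : Subgroup G)
    (x : {g : G // g ≠ 1}) (hx : (x : G) ∈ H) :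
    ((genNonCoprimeGraph G H).neighborSet x).ncard =
      (∑ d ∈ (Fintype.card G).divisors.filter
          (fun d => 1 < d ∧ 1 < Nat.gcd d (orderOf (x : G))), Nat.totient d) - 1 := by
  rw [ncard_neighborSet_genNonCoprimeGraph_of_mem hx, Set.ncard_eq_toFinset_card',
    Set.toFinset_ofPred,
    IsCyclic.card_filter_orderOf (fun k : ℕ => Nat.gcd k (orderOf (x : G)) ≠ 1)]
  congr 1
  refine sum_congr (filter_congr fun d hd => ?_) fun _ _ => rfl
  have hd_pos : 0 < d := Nat.pos_of_mem_divisors hd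
  have hgcd_pos := Nat.gcd_pos_of_pos_left (orderOf (x : G)) hd_pos
  have hgcd_le := Nat.gcd_le_left (orderOf (x : G)) hd_pos
  omega

theorem degree_of_mem_eq {G : Type*} [Group G] [Fintype G] [DecidableEq G]
    (hG : IsCyclic G) (hn : 3 ≤ Fintype.card G)
    (H : Subgroup G) (hH : H ≠ ⊥)
    (x : {g : G // g ≠ 1}) (hx : (x : G) ∈ H) :
    ((genNonCoprimeGraph G H).neighborSet x).ncard =
      (∑ d ∈ (Fintype.card G).divisors.filter
          (fun d => 1 < d ∧ 1 < Nat.gcd d (orderOf (x : G))), Nat.totient d) - 1 :=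
  degree_of_mem_eq_general hG H x hx
end

section
/- Let G be a finite cyclic group of order n ≥ 3 and H ≠ {e} a subgroup such that every prime divisor of n divides |H|. Then the maximum degree of the generalized non-coprime graph Γ_{G,H} equals |G| − 2. -/
/-! A generator `g` of `H` is in `H` and, by the divisibility hypothesis, its order shares a
prime with the order of every non-identity element; so `g` is adjacent to every other vertex,
and its degree `|G| - 2` is the largest possible. -/

lemma Nat.card_subtype_ne {α : Type*} [Finite α] (a : α) :
    Nat.card {x : α // x ≠ a} = Nat.card α - 1 := by
  rw [← Set.ncard_singleton a, ← Set.ncard_compl]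
  rfl

lemma SimpleGraph.ncard_neighborSet_le {V : Type*} [Finite V] (Γ : SimpleGraph V) (v : V) :
    (Γ.neighborSet v).ncard ≤ Nat.card V - 1 :=
  calc (Γ.neighborSet v).ncard ≤ ({v}ᶜ : Set V).ncard :=
        Set.ncard_le_ncard fun _ hw => (Γ.ne_of_adj hw).symm
    _ = Nat.card V - 1 := by rw [Set.ncard_compl, Set.ncard_singleton]

lemma Subgroup.exists_mem_ne_one_orderOf_eq_natCard {G : Type*} [Group G] [IsCyclic G]
    {H : Subgroup G} (hH : H ≠ ⊥) : ∃ g ∈ H, g ≠ 1 ∧ orderOf g = Nat.card H := by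
  obtain ⟨g, hg⟩ := IsCyclic.exists_ofOrder_eq_natCard (α := H)
  refine ⟨g, g.2, fun h1 => hH (H.eq_bot_of_card_eq ?_), by rw [Subgroup.orderOf_coe, hg]⟩
  rw [← hg, orderOf_eq_one_iff]
  exact Subtype.ext h1

lemma genNonCoprimeGraph_neighborSet_eq_compl {G : Type*} [Group G] [Finite G]
    {H : Subgroup G} {g : G} (hg : g ≠ 1) (hgH : g ∈ H)
    (hprime : ∀ p : ℕ, p.Prime → p ∣ Nat.card G → p ∣ orderOf g) :
    (genNonCoprimeGraph G H).neighborSet ⟨g, hg⟩ = {⟨g, hg⟩}ᶜ := by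
  ext b
  refine ⟨fun hb => hb.1.symm, fun hb => ⟨Ne.symm hb, ?_, Or.inl hgH⟩⟩
  have hb1 : orderOf (b : G) ≠ 1 := orderOf_eq_one_iff.not.mpr b.2
  obtain ⟨p, hp, hpb⟩ := Nat.exists_prime_and_dvd hb1
  exact Nat.Prime.not_coprime_iff_dvd.mpr
    ⟨p, hp, hprime p hp (hpb.trans (orderOf_dvd_natCard _)), hpb⟩

theorem maxDegree_eq_card_sub_two_general {G : Type*} [Group G] [Fintype G]
    (hG : IsCyclic G)
    (H : Subgroup G) (hH : H ≠ ⊥)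
    (hdiv : ∀ p : ℕ, p.Prime → p ∣ Fintype.card G → p ∣ Nat.card H) :
    (∃ v : {g : G // g ≠ 1},
        ((genNonCoprimeGraph G H).neighborSet v).ncard = Fintype.card G - 2) ∧
    (∀ v : {g : G // g ≠ 1},
        ((genNonCoprimeGraph G H).neighborSet v).ncard ≤ Fintype.card G - 2) := by
  obtain ⟨g, hgH, hg1, hgord⟩ := H.exists_mem_ne_one_orderOf_eq_natCard hH
  have hcard : Nat.card {x : G // x ≠ 1} - 1 = Fintype.card G - 2 := by
    rw [Nat.card_subtype_ne, Nat.card_eq_fintype_card]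
    omega
  have hprime : ∀ p : ℕ, p.Prime → p ∣ Nat.card G → p ∣ orderOf g := fun p hp hpG =>
    hgord ▸ hdiv p hp (Nat.card_eq_fintype_card (α := G) ▸ hpG)
  refine ⟨⟨⟨g, hg1⟩, ?_⟩, fun v => hcard ▸ (genNonCoprimeGraph G H).ncard_neighborSet_le v⟩
  rw [genNonCoprimeGraph_neighborSet_eq_compl hg1 hgH hprime, Set.ncard_compl,
    Set.ncard_singleton, hcard]

theorem maxDegree_eq_card_sub_two {G : Type*} [Group G] [Fintype G]
    (hG : IsCyclic G) (hn : 3 ≤ Fintype.card G)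
    (H : Subgroup G) (hH : H ≠ ⊥)
    (hdiv : ∀ p : ℕ, p.Prime → p ∣ Fintype.card G → p ∣ Nat.card H) :
    (∃ v : {g : G // g ≠ 1},
        ((genNonCoprimeGraph G H).neighborSet v).ncard = Fintype.card G - 2) ∧
    (∀ v : {g : G // g ≠ 1},
        ((genNonCoprimeGraph G H).neighborSet v).ncard ≤ Fintype.card G - 2) :=
  maxDegree_eq_card_sub_two_general hG H hH hdiv
end

section
/- Let G be a finite cyclic group of order n ≥ 3 and H ≠ {e} a subgroup. The generalized non-coprime graph Γ_{G,H} is connected if and only if every prime divisor of n divides |H|. -/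
/-!
If a prime `p` divides `|G|` but not `|H|`, an element of order `p` (Cauchy) lies outside `H`
and every neighbour would be an element of `H` of order divisible by `p`; so it is an isolated
vertex, while `H ≠ ⊥` supplies a second vertex. Conversely, if `H` is cyclic and every prime
divisor of `|G|` divides `|H|`, a generator of `H` shares a prime factor with the order of every
non-identity element, so it is adjacent to all other vertices.
-/

namespace genNonCoprimeGraph

variable {G : Type*} [Group G] {H : Subgroup G}

lemma isIsolated_of_orderOf_eq_prime {x : {x : G // x ≠ 1}} {p : ℕ} (hp : p.Prime)
    (hx : orderOf (x : G) = p) (hpH : ¬ p ∣ Nat.card H) :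
    (genNonCoprimeGraph G H).IsIsolated x := by
  rintro y ⟨-, hgcd, hmem⟩
  have hxH : (x : G) ∉ H := fun h ↦ hpH (hx ▸ H.orderOf_dvd_natCard h)
  have hyH : (y : G) ∈ H := hmem.resolve_left hxH
  rw [hx, Ne, ← Nat.coprime_iff_gcd_eq_one, hp.coprime_iff_not_dvd, not_not] at hgcd
  exact hpH (hgcd.trans (H.orderOf_dvd_natCard hyH))

theorem prime_dvd_card_of_connected [Finite G] (hH : H ≠ ⊥)
    (hconn : (genNonCoprimeGraph G H).Connected) {p : ℕ} (hp : p.Prime)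
    (hpG : p ∣ Nat.card G) : p ∣ Nat.card H := by
  by_contra hpH
  have : Fact p.Prime := ⟨hp⟩
  obtain ⟨x, hx⟩ := exists_prime_orderOf_dvd_card' p hpG
  have hx1 : x ≠ 1 := fun h ↦ hp.one_lt.ne' (by rw [← hx, h, orderOf_one])
  have hxH : x ∉ H := fun h ↦ hpH (hx ▸ H.orderOf_dvd_natCard h)
  obtain ⟨h, hh1⟩ := Subgroup.ne_bot_iff_exists_ne_one.mp hH
  have : Nontrivial {x : G // x ≠ 1} :=
    ⟨⟨x, hx1⟩, ⟨h, by simpa using hh1⟩, fun hxh ↦ hxH (Subtype.mk.inj hxh ▸ h.2)⟩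
  exact hconn.preconnected.not_isIsolated _ (isIsolated_of_orderOf_eq_prime (x := ⟨x, hx1⟩) hp hx hpH)

lemma adj_of_forall_prime_dvd_orderOf [Finite G] {g : {x : G // x ≠ 1}} (hgH : (g : G) ∈ H)
    (hg : ∀ p : ℕ, p.Prime → p ∣ Nat.card G → p ∣ orderOf (g : G))
    {a : {x : G // x ≠ 1}} (ha : a ≠ g) : (genNonCoprimeGraph G H).Adj a g := by
  refine ⟨ha, fun hgcd ↦ ?_, Or.inr hgH⟩
  obtain ⟨q, hq, hqa⟩ := Nat.exists_prime_and_dvd (mt orderOf_eq_one_iff.mp a.2)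
  have hqg := hg q hq (hqa.trans (orderOf_dvd_natCard _))
  exact hq.one_lt.ne' (Nat.dvd_one.mp (hgcd ▸ Nat.dvd_gcd hqa hqg))

theorem connected_of_forall_prime_dvd_card [Finite G] [IsCyclic H] (hH : H ≠ ⊥)
    (hdvd : ∀ p : ℕ, p.Prime → p ∣ Nat.card G → p ∣ Nat.card H) :
    (genNonCoprimeGraph G H).Connected := by
  obtain ⟨g, hg⟩ := IsCyclic.exists_ofOrder_eq_natCard (α := H)
  have hg1 : (g : G) ≠ 1 := by
    rintro h
    rw [← Subgroup.orderOf_coe, h, orderOf_one] at hg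
    exact hH (Subgroup.eq_bot_of_card_eq H hg.symm)
  have hgG : ∀ p : ℕ, p.Prime → p ∣ Nat.card G → p ∣ orderOf (g : G) := fun p hp hpG ↦ by
    simpa [Subgroup.orderOf_coe, hg] using hdvd p hp hpG
  refine (SimpleGraph.connected_iff_exists_forall_reachable _).mpr ⟨⟨g, hg1⟩, fun a ↦ ?_⟩
  obtain rfl | ha := eq_or_ne a ⟨g, hg1⟩
  · rfl
  · exact (adj_of_forall_prime_dvd_orderOf g.2 hgG ha).symm.reachable

end genNonCoprimeGraph

theorem connected_iff_general {G : Type*} [Group G] [Fintype G]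
    (hG : IsCyclic G)
    (H : Subgroup G) (hH : H ≠ ⊥) :
    (genNonCoprimeGraph G H).Connected ↔
      ∀ p : ℕ, p.Prime → p ∣ Fintype.card G → p ∣ Nat.card H := by
  rw [← Nat.card_eq_fintype_card]
  exact ⟨fun hconn _ hp ↦ genNonCoprimeGraph.prime_dvd_card_of_connected hH hconn hp,
    genNonCoprimeGraph.connected_of_forall_prime_dvd_card hH⟩

theorem connected_iff {G : Type*} [Group G] [Fintype G]
    (hG : IsCyclic G) (hn : 3 ≤ Fintype.card G)
    (H : Subgroup G) (hH : H ≠ ⊥) :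
    (genNonCoprimeGraph G H).Connected ↔
      ∀ p : ℕ, p.Prime → p ∣ Fintype.card G → p ∣ Nat.card H :=
  connected_iff_general hG H hH
end

section
/- Let G be a finite cyclic group of order n ≥ 3 and H ≠ {e} a subgroup. Then the generalized non-coprime graph Γ_{G,H} is the complete graph on |G| − 1 vertices if and only if G is a p-group for some prime p and H = G. -/
/-!
If Γ_{G,H} is complete, Cauchy elements of two prime orders `p`, `q` dividing `|G|` are adjacent,
so `p = q` and `G` is a `p`-group; and a generator `g` of `G` is adjacent to `g⁻¹ ≠ g`
(as `|g| ≥ 3`), so `g ∈ H` and `H = G`. Conversely, in a `p`-group the orders of any two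
non-identity elements are both divisible by `p`.
-/

section

variable {G : Type*} [Group G]

theorem genNonCoprimeGraph_eq_top_iff (H : Subgroup G) :
    genNonCoprimeGraph G H = ⊤ ↔ ∀ a b : G, a ≠ 1 → b ≠ 1 → a ≠ b →
      (orderOf a).gcd (orderOf b) ≠ 1 ∧ (a ∈ H ∨ b ∈ H) := by
  simp only [SimpleGraph.ext_iff, funext_iff, SimpleGraph.top_adj, genNonCoprimeGraph,
    ne_eq, Subtype.forall, Subtype.mk.injEq, eq_iff_iff, and_iff_left_iff_imp]
  exact ⟨fun h a b ha hb => h a ha b hb, fun h a ha b hb => h a b ha hb⟩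

theorem IsPGroup.gcd_orderOf_ne_one {p : ℕ} [Fact p.Prime] (hG : IsPGroup p G) {a b : G}
    (ha : a ≠ 1) (hb : b ≠ 1) : (orderOf a).gcd (orderOf b) ≠ 1 := fun h =>
  Fact.out (p := p.Prime) |>.not_dvd_one <|
    h ▸ Nat.dvd_gcd (hG.dvd_orderOf ha) (hG.dvd_orderOf hb)

theorem IsPGroup.genNonCoprimeGraph_top_eq_top {p : ℕ} [Fact p.Prime] (hG : IsPGroup p G) :
    genNonCoprimeGraph G ⊤ = ⊤ :=
  (genNonCoprimeGraph_eq_top_iff ⊤).2 fun _ _ ha hb _ =>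
    ⟨hG.gcd_orderOf_ne_one ha hb, .inl (Subgroup.mem_top _)⟩

variable {H : Subgroup G}

theorem mem_of_genNonCoprimeGraph_eq_top (h : genNonCoprimeGraph G H = ⊤) {g : G}
    (hg : g ^ 2 ≠ 1) : g ∈ H := by
  have hg1 : g ≠ 1 := by rintro rfl; simp at hg
  have hginv : g ≠ g⁻¹ := fun he => hg (by rw [sq]; exact eq_inv_iff_mul_eq_one.1 he)
  obtain ⟨-, hgH | hgH⟩ :=
    (genNonCoprimeGraph_eq_top_iff H).1 h g g⁻¹ hg1 (inv_ne_one.2 hg1) hginv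
  · exact hgH
  · simpa using H.inv_mem hgH

theorem eq_of_prime_dvd_card_of_genNonCoprimeGraph_eq_top [Finite G]
    (h : genNonCoprimeGraph G H = ⊤) {p q : ℕ} (hp : p.Prime) (hq : q.Prime)
    (hpG : p ∣ Nat.card G) (hqG : q ∣ Nat.card G) : p = q := by
  have := Fact.mk hp
  have := Fact.mk hq
  obtain ⟨a, ha⟩ := exists_prime_orderOf_dvd_card' p hpG
  obtain ⟨b, hb⟩ := exists_prime_orderOf_dvd_card' q hqG
  by_contra hpq
  have ha1 : a ≠ 1 := fun h1 => hp.one_lt.ne (by rw [← ha, h1, orderOf_one])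
  have hb1 : b ≠ 1 := fun h1 => hq.one_lt.ne (by rw [← hb, h1, orderOf_one])
  have hab : a ≠ b := fun he => hpq (by rw [← ha, ← hb, he])
  have hgcd := ((genNonCoprimeGraph_eq_top_iff H).1 h a b ha1 hb1 hab).1
  rw [ha, hb] at hgcd
  exact hgcd ((Nat.coprime_primes hp hq).2 hpq)

theorem exists_isPGroup_of_genNonCoprimeGraph_eq_top [Finite G]
    (h : genNonCoprimeGraph G H = ⊤) : ∃ p : ℕ, p.Prime ∧ IsPGroup p G := by
  obtain hempty | ⟨q, hq_mem⟩ := (Nat.card G).primeFactors.eq_empty_or_nonempty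
  · refine ⟨2, Nat.prime_two, (isPGroup_iff_primeFactors_card_subset two_ne_zero).2 ?_⟩
    simp [hempty]
  · obtain ⟨hq, hqG, -⟩ := Nat.mem_primeFactors.1 hq_mem
    refine ⟨q, hq, (isPGroup_iff_primeFactors_card_subset hq.ne_zero).2 fun p hp_mem => ?_⟩
    obtain ⟨hp, hpG, -⟩ := Nat.mem_primeFactors.1 hp_mem
    simpa [hq.primeFactors] using eq_of_prime_dvd_card_of_genNonCoprimeGraph_eq_top h hp hq hpG hqG

end

theorem complete_iff_general {G : Type*} [Group G] [Fintype G]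
    (hG : IsCyclic G) (hn : 3 ≤ Fintype.card G)
    (H : Subgroup G) :
    genNonCoprimeGraph G H = ⊤ ↔
      (∃ p : ℕ, p.Prime ∧ IsPGroup p G) ∧ H = ⊤ := by
  constructor
  · intro h
    refine ⟨exists_isPGroup_of_genNonCoprimeGraph_eq_top h, ?_⟩
    obtain ⟨g, hg⟩ := hG.exists_generator
    have hg_order : orderOf g = Fintype.card G := by
      rw [← Nat.card_eq_fintype_card]; exact orderOf_eq_card_of_forall_mem_zpowers hg
    have hgH : g ∈ H :=
      mem_of_genNonCoprimeGraph_eq_top h (pow_ne_one_of_lt_orderOf two_ne_zero (by omega))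
    exact eq_top_iff.2 fun x _ => by obtain ⟨k, rfl⟩ := hg x; exact H.zpow_mem hgH k
  · rintro ⟨⟨p, hp, hpG⟩, rfl⟩
    have := Fact.mk hp
    exact hpG.genNonCoprimeGraph_top_eq_top

theorem complete_iff {G : Type*} [Group G] [Fintype G]
    (hG : IsCyclic G) (hn : 3 ≤ Fintype.card G)
    (H : Subgroup G) (hH : H ≠ ⊥) :
    genNonCoprimeGraph G H = ⊤ ↔
      (∃ p : ℕ, p.Prime ∧ IsPGroup p G) ∧ H = ⊤ :=
  complete_iff_general hG hn H
end

section
/- Let G be a finite cyclic group of order n ≥ 3 and H ≠ {e} a subgroup. Then the generalized non-coprime graph Γ_{G,H} is claw-free (contains no induced K_{1,3}) if and only if either (H = G and |G| has at most two distinct prime divisors) or (H ≠ G and G ≅ Z_4 or G ≅ Z_6). -/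
open scoped Nat

namespace SimpleGraph

variable {V : Type*} {Γ : SimpleGraph V}

variable (Γ) in
def HasClaw : Prop :=
  ∃ v a b c : V, a ≠ b ∧ a ≠ c ∧ b ≠ c ∧ Γ.Adj v a ∧ Γ.Adj v b ∧ Γ.Adj v c ∧
    ¬ Γ.Adj a b ∧ ¬ Γ.Adj a c ∧ ¬ Γ.Adj b c

theorem HasClaw.four_le_card [Fintype V] (h : Γ.HasClaw) : 4 ≤ Fintype.card V := by
  classical
  obtain ⟨v, a, b, c, hab, hac, hbc, hva, hvb, hvc, -⟩ := h
  have : ({v, a, b, c} : Finset V).card = 4 := by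
    simp [Finset.card_insert_of_notMem, *, hva.ne, hvb.ne, hvc.ne]
  exact this ▸ Finset.card_le_univ _

end SimpleGraph

theorem Nat.three_le_card_primeFactors {n a b c : ℕ} (hn : n ≠ 0)
    (ha : a ∣ n) (hb : b ∣ n) (hc : c ∣ n) (ha1 : a ≠ 1) (hb1 : b ≠ 1) (hc1 : c ≠ 1)
    (hab : a.Coprime b) (hac : a.Coprime c) (hbc : b.Coprime c) :
    3 ≤ n.primeFactors.card := by
  have mem {d : ℕ} (hd : d ∣ n) (hd1 : d ≠ 1) : d.minFac ∈ n.primeFactors :=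
    mem_primeFactors.2 ⟨minFac_prime hd1, (minFac_dvd d).trans hd, hn⟩
  have ne {d e : ℕ} (hd1 : d ≠ 1) (hde : d.Coprime e) : d.minFac ≠ e.minFac := fun h =>
    (minFac_prime hd1).one_lt.ne' <|
      eq_one_of_dvd_coprimes hde (minFac_dvd d) (h ▸ minFac_dvd e)
  exact Finset.two_lt_card.2 ⟨_, mem ha ha1, _, mem hb hb1, _, mem hc hc1,
    ne ha1 hab, ne ha1 hac, ne hb1 hbc⟩

theorem Nat.eq_of_totient_le_two {n : ℕ} (hn : n ≠ 0) (h : φ n ≤ 2) :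
    n = 1 ∨ n = 2 ∨ n = 3 ∨ n = 4 ∨ n = 6 := by
  induction n using Nat.strong_induction_on with
  | _ n ih =>
  rcases eq_or_ne n 1 with rfl | hn1
  · simp
  obtain ⟨p, hp, k, rfl⟩ := Nat.exists_prime_and_dvd hn1
  have hk0 : k ≠ 0 := right_ne_zero_of_mul hn
  have hφ : (p - 1) * φ k ≤ 2 := by
    refine le_trans ?_ h
    by_cases hpk : p ∣ k
    · rw [totient_mul_of_prime_of_dvd hp hpk]
      exact Nat.mul_le_mul_right _ (sub_le _ _)
    · rw [totient_mul_of_prime_of_not_dvd hp hpk]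
  have hp2 := hp.two_le
  have hp3 : p ≤ 3 := by
    have := Nat.le_mul_of_pos_right (p - 1) (totient_pos.2 (pos_of_ne_zero hk0))
    omega
  have hφk : φ k ≤ 2 := le_trans (Nat.le_mul_of_pos_left _ (by omega)) hφ
  rcases ih k (lt_mul_left (pos_of_ne_zero hk0) hp.one_lt) hk0 hφk with
    rfl | rfl | rfl | rfl | rfl <;> interval_cases p <;> revert h <;> decide

section Cyclic

variable {G : Type*} [Group G]

theorem IsCyclic.two_lt_totient_iff [Fintype G] [IsCyclic G] {d : ℕ}
    (hd : d ∣ Fintype.card G) :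
    2 < φ d ↔ ∃ x y z : G, x ≠ y ∧ x ≠ z ∧ y ≠ z ∧
      orderOf x = d ∧ orderOf y = d ∧ orderOf z = d := by
  classical
  rw [← IsCyclic.card_orderOf_eq_totient hd, Finset.two_lt_card_iff]
  simp only [Finset.mem_filter, Finset.mem_univ, true_and]
  constructor
  · rintro ⟨x, y, z, hx, hy, hz, hxy, hxz, hyz⟩
    exact ⟨x, y, z, hxy, hxz, hyz, hx, hy, hz⟩
  · rintro ⟨x, y, z, hxy, hxz, hyz, hx, hy, hz⟩
    exact ⟨x, y, z, hx, hy, hz, hxy, hxz, hyz⟩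

theorem IsCyclic.mem_of_orderOf_dvd_natCard [Fintype G] [IsCyclic G] (H : Subgroup G)
    {x : G} (hx : orderOf x ∣ Nat.card H) : x ∈ H := by
  classical
  set S := Finset.univ.filter fun y : G => y ^ Nat.card H = 1
  -- `H` fills up the set `S` of solutions of `y ^ |H| = 1`, which has at most `|H|` elements.
  have hsub : (H : Set G).toFinset ⊆ S := fun y hy => by
    simp only [S, Finset.mem_filter, Finset.mem_univ, true_and]
    exact orderOf_dvd_iff_pow_eq_one.1 (H.orderOf_dvd_natCard (by simpa using hy))
  have heq : (H : Set G).toFinset = S := Finset.eq_of_subset_of_card_le hsub <| by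
    rw [Set.toFinset_card, ← Nat.card_eq_fintype_card]
    exact IsCyclic.card_pow_eq_one_le Nat.card_pos
  have hxS : x ∈ S := by
    simpa [S] using orderOf_dvd_iff_pow_eq_one.1 hx
  simpa [← heq] using hxS

end Cyclic

namespace genNonCoprimeGraph

variable {G : Type*} [Group G] {H : Subgroup G}

theorem three_le_card_primeFactors_of_hasClaw_top [Finite G]
    (h : (genNonCoprimeGraph G ⊤).HasClaw) : 3 ≤ (Nat.card G).primeFactors.card := by
  obtain ⟨-, a, b, c, hab, hac, hbc, -, -, -, hnab, hnac, hnbc⟩ := h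
  have coprime {x y : {g : G // g ≠ 1}} (hxy : x ≠ y) (hn : ¬ (genNonCoprimeGraph G ⊤).Adj x y) :
      (orderOf (x : G)).Coprime (orderOf (y : G)) :=
    by_contra fun hg => hn ⟨hxy, hg, Or.inl (Subgroup.mem_top _)⟩
  have ne_one (x : {g : G // g ≠ 1}) : orderOf (x : G) ≠ 1 := mt orderOf_eq_one_iff.1 x.2
  exact Nat.three_le_card_primeFactors Nat.card_pos.ne' (orderOf_dvd_natCard _)
    (orderOf_dvd_natCard _) (orderOf_dvd_natCard _) (ne_one a) (ne_one b) (ne_one c)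
    (coprime hab hnab) (coprime hac hnac) (coprime hbc hnbc)

theorem hasClaw_top_of_three_le_card_primeFactors [Finite G] [IsCyclic G]
    (h : 3 ≤ (Nat.card G).primeFactors.card) : (genNonCoprimeGraph G ⊤).HasClaw := by
  obtain ⟨p, hp, q, hq, r, hr, hpq, hpr, hqr⟩ := Finset.two_lt_card.1 h
  simp only [Nat.mem_primeFactors] at hp hq hr
  have vertex {ℓ : ℕ} (hℓ : ℓ.Prime) (hdvd : ℓ ∣ Nat.card G) :
      ∃ x : {g : G // g ≠ 1}, orderOf (x : G) = ℓ := by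
    have := Fact.mk hℓ
    obtain ⟨x, hx⟩ := exists_prime_orderOf_dvd_card' ℓ hdvd
    exact ⟨⟨x, fun h => hℓ.ne_one (by rw [← hx, h, orderOf_one])⟩, hx⟩
  obtain ⟨x, hx⟩ := vertex hp.1 hp.2.1
  obtain ⟨y, hy⟩ := vertex hq.1 hq.2.1
  obtain ⟨z, hz⟩ := vertex hr.1 hr.2.1
  obtain ⟨g, hg⟩ := IsCyclic.exists_ofOrder_eq_natCard (α := G)
  have hg1 : g ≠ 1 := by
    rintro rfl
    exact hp.1.ne_one (Nat.dvd_one.1 (by rw [orderOf_one] at hg; exact hg ▸ hp.2.1))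
  have ne_of_orderOf_ne {a b : {g : G // g ≠ 1}} (h : orderOf (a : G) ≠ orderOf (b : G)) :
      a ≠ b := fun e => h (e ▸ rfl)
  have center {ℓ ℓ' : ℕ} (hℓ : ℓ.Prime) (hℓ' : ℓ'.Prime) (hne : ℓ' ≠ ℓ) (hℓn : ℓ ∣ Nat.card G)
      (hℓ'n : ℓ' ∣ Nat.card G) {a : {g : G // g ≠ 1}} (ha : orderOf (a : G) = ℓ) :
      (genNonCoprimeGraph G ⊤).Adj ⟨g, hg1⟩ a := by
    refine ⟨ne_of_orderOf_ne fun h => hne ?_, ?_, Or.inl (Subgroup.mem_top _)⟩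
    · exact (Nat.prime_dvd_prime_iff_eq hℓ' hℓ).1 (by rwa [← ha, ← h, hg])
    · rw [hg, ha, Nat.gcd_eq_right hℓn]
      exact hℓ.ne_one
  have leaves {a b : {g : G // g ≠ 1}} {ℓ ℓ' : ℕ} (hℓ : ℓ.Prime) (hℓ' : ℓ'.Prime) (hne : ℓ ≠ ℓ')
      (ha : orderOf (a : G) = ℓ) (hb : orderOf (b : G) = ℓ') :
      a ≠ b ∧ ¬ (genNonCoprimeGraph G ⊤).Adj a b := by
    refine ⟨ne_of_orderOf_ne (ha ▸ hb ▸ hne), fun hab => hab.2.1 ?_⟩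
    rw [ha, hb]
    exact (Nat.coprime_primes hℓ hℓ').2 hne
  obtain ⟨hxy, hnxy⟩ := leaves hp.1 hq.1 hpq hx hy
  obtain ⟨hxz, hnxz⟩ := leaves hp.1 hr.1 hpr hx hz
  obtain ⟨hyz, hnyz⟩ := leaves hq.1 hr.1 hqr hy hz
  exact ⟨⟨g, hg1⟩, x, y, z, hxy, hxz, hyz, center hp.1 hq.1 hpq.symm hp.2.1 hq.2.1 hx,
    center hq.1 hp.1 hpq hq.2.1 hp.2.1 hy, center hr.1 hp.1 hpr hr.2.1 hp.2.1 hz,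
    hnxy, hnxz, hnyz⟩

theorem hasClaw_top_iff [Finite G] [IsCyclic G] :
    (genNonCoprimeGraph G ⊤).HasClaw ↔ 3 ≤ (Nat.card G).primeFactors.card :=
  ⟨three_le_card_primeFactors_of_hasClaw_top, hasClaw_top_of_three_le_card_primeFactors⟩

theorem not_hasClaw_of_card_le_four [Fintype G] (h : Fintype.card G ≤ 4) :
    ¬ (genNonCoprimeGraph G H).HasClaw := fun hc => by
  classical
  have := hc.four_le_card
  rw [Fintype.card_subtype_compl, Fintype.card_subtype_eq] at this
  omega

theorem hasClaw_of_not_mem {v x y z : G} (hv : v ∈ H) (hv1 : v ≠ 1)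
    (hxy : x ≠ y) (hxz : x ≠ z) (hyz : y ≠ z) (hx : x ∉ H) (hy : y ∉ H) (hz : z ∉ H)
    (hvx : (orderOf v).gcd (orderOf x) ≠ 1) (hvy : (orderOf v).gcd (orderOf y) ≠ 1)
    (hvz : (orderOf v).gcd (orderOf z) ≠ 1) : (genNonCoprimeGraph G H).HasClaw := by
  have vertex {u : G} (hu : u ∉ H) : u ≠ 1 := fun h => hu (h ▸ H.one_mem)
  have center {u : G} (hu : u ∉ H) (hvu : (orderOf v).gcd (orderOf u) ≠ 1) :
      (genNonCoprimeGraph G H).Adj ⟨v, hv1⟩ ⟨u, vertex hu⟩ :=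
    ⟨fun h => hu (Subtype.mk.inj h ▸ hv), hvu, Or.inl hv⟩
  have leaves {u w : G} (hu : u ∉ H) (hw : w ∉ H) :
      ¬ (genNonCoprimeGraph G H).Adj ⟨u, vertex hu⟩ ⟨w, vertex hw⟩ :=
    fun h => h.2.2.elim hu hw
  exact ⟨⟨v, hv1⟩, ⟨x, vertex hx⟩, ⟨y, vertex hy⟩, ⟨z, vertex hz⟩,
    Subtype.coe_ne_coe.1 hxy, Subtype.coe_ne_coe.1 hxz, Subtype.coe_ne_coe.1 hyz,
    center hx hvx, center hy hvy, center hz hvz, leaves hx hy, leaves hx hz, leaves hy hz⟩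

theorem exists_three_not_mem_of_hasClaw (hp : (Nat.card H).Prime)
    (h : (genNonCoprimeGraph G H).HasClaw) :
    ∃ x y z : G, x ≠ y ∧ x ≠ z ∧ y ≠ z ∧ (x ∉ H ∧ Nat.card H ∣ orderOf x) ∧
      (y ∉ H ∧ Nat.card H ∣ orderOf y) ∧ (z ∉ H ∧ Nat.card H ∣ orderOf z) := by
  obtain ⟨v, a, b, c, hab, hac, hbc, hva, hvb, hvc, hnab, hnac, hnbc⟩ := h
  have orderOf_of_mem {u : {g : G // g ≠ 1}} (hu : (u : G) ∈ H) : orderOf (u : G) = Nat.card H :=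
    ((Nat.dvd_prime hp).1 (H.orderOf_dvd_natCard hu)).resolve_left (mt orderOf_eq_one_iff.1 u.2)
  -- Two vertices in `H` are always adjacent, since their orders are both `|H|`.
  have hv : (v : G) ∈ H := by
    by_contra hv
    have ha := hva.2.2.resolve_left hv
    have hb := hvb.2.2.resolve_left hv
    refine hnab ⟨hab, ?_, Or.inl ha⟩
    rw [orderOf_of_mem ha, orderOf_of_mem hb, Nat.gcd_self]
    exact hp.ne_one
  have dvd_of_adj {u} (hu : (genNonCoprimeGraph G H).Adj v u) : Nat.card H ∣ orderOf (u : G) :=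
    (Nat.coprime_or_dvd_of_prime hp _).resolve_left (orderOf_of_mem hv ▸ hu.2.1)
  have not_mem {u w} (huw : u ≠ w) (hw : (genNonCoprimeGraph G H).Adj v w)
      (hn : ¬ (genNonCoprimeGraph G H).Adj u w) : (u : G) ∉ H := fun hu => by
    refine hn ⟨huw, ?_, Or.inl hu⟩
    rw [orderOf_of_mem hu, Nat.gcd_eq_left (dvd_of_adj hw)]
    exact hp.ne_one
  exact ⟨a, b, c, Subtype.coe_ne_coe.2 hab, Subtype.coe_ne_coe.2 hac, Subtype.coe_ne_coe.2 hbc,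
    ⟨not_mem hab hvb hnab, dvd_of_adj hva⟩, ⟨not_mem hbc hvc hnbc, dvd_of_adj hvb⟩,
    ⟨not_mem hac.symm hva (fun h => hnac h.symm), dvd_of_adj hvc⟩⟩

section Cyclic

variable [Fintype G] [IsCyclic G]

theorem hasClaw_of_card_ne_four_of_card_ne_six (hH : H ≠ ⊥) (hT : H ≠ ⊤)
    (h4 : Fintype.card G ≠ 4) (h6 : Fintype.card G ≠ 6) : (genNonCoprimeGraph G H).HasClaw := by
  have hdvd : Nat.card H ∣ Fintype.card G :=
    Nat.card_eq_fintype_card (α := G) ▸ H.card_subgroup_dvd_card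
  have hH1 : Nat.card H ≠ 1 := mt Subgroup.card_eq_one.1 hH
  have hHn : Nat.card H ≠ Fintype.card G := by
    rw [← Nat.card_eq_fintype_card]
    exact mt H.card_eq_iff_eq_top.1 hT
  have hn1 : Fintype.card G ≠ 1 := fun h => hH1 (Nat.dvd_one.1 (h ▸ hdvd))
  have hn : ¬ (Fintype.card G).Prime := fun hp =>
    (hp.eq_one_or_self_of_dvd _ hdvd).elim hH1 hHn
  -- The leaves of the claw are three generators of `G`.
  have h2 : 2 < φ (Fintype.card G) := by
    by_contra hle
    rcases Nat.eq_of_totient_le_two Fintype.card_ne_zero (not_lt.1 hle) with h | h | h | h | h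
    exacts [hn1 h, hn (h ▸ Nat.prime_two), hn (h ▸ Nat.prime_three), h4 h, h6 h]
  obtain ⟨x, y, z, hxy, hxz, hyz, hx, hy, hz⟩ := (IsCyclic.two_lt_totient_iff dvd_rfl).1 h2
  obtain ⟨v, hv, hv1⟩ := H.bot_or_exists_ne_one.resolve_left hH
  have not_mem {u : G} (hu : orderOf u = Fintype.card G) : u ∉ H := fun h =>
    hHn (Nat.dvd_antisymm hdvd (hu ▸ H.orderOf_dvd_natCard h))
  have gcd_ne_one {u : G} (hu : orderOf u = Fintype.card G) :
      (orderOf v).gcd (orderOf u) ≠ 1 := by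
    rw [hu, Nat.gcd_eq_left orderOf_dvd_card]
    exact mt orderOf_eq_one_iff.1 hv1
  exact hasClaw_of_not_mem hv hv1 hxy hxz hyz (not_mem hx) (not_mem hy) (not_mem hz)
    (gcd_ne_one hx) (gcd_ne_one hy) (gcd_ne_one hz)

theorem not_hasClaw_of_card_eq_six (hH : H ≠ ⊥) (hT : H ≠ ⊤) (h6 : Fintype.card G = 6) :
    ¬ (genNonCoprimeGraph G H).HasClaw := by
  intro h
  have hdvd : Nat.card H ∣ 6 := h6 ▸ Nat.card_eq_fintype_card (α := G) ▸ H.card_subgroup_dvd_card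
  have hp : (Nat.card H).Prime := by
    have : Nat.card H ≠ 6 := by
      rw [← h6, ← Nat.card_eq_fintype_card]
      exact mt H.card_eq_iff_eq_top.1 hT
    have key : ∀ m ∈ Nat.divisors 6, m ≠ 1 → m ≠ 6 → m.Prime := by decide
    exact key _ (Nat.mem_divisors.2 ⟨hdvd, by norm_num⟩) (mt Subgroup.card_eq_one.1 hH) this
  obtain ⟨x, y, z, hxy, hxz, hyz, hx, hy, hz⟩ := exists_three_not_mem_of_hasClaw hp h
  have orderOf_eq_six {u : G} (hu : u ∉ H ∧ Nat.card H ∣ orderOf u) : orderOf u = 6 := by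
    have key : ∀ d ∈ Nat.divisors 6, ∀ m ∈ Nat.divisors 6, m ≠ 1 → m ∣ d → ¬ d ∣ m → d = 6 := by
      decide
    exact key _ (Nat.mem_divisors.2 ⟨h6 ▸ orderOf_dvd_card, by norm_num⟩) _
      (Nat.mem_divisors.2 ⟨hdvd, by norm_num⟩) hp.ne_one hu.2
      (mt (IsCyclic.mem_of_orderOf_dvd_natCard H) hu.1)
  have : 2 < φ 6 := (IsCyclic.two_lt_totient_iff (h6 ▸ dvd_rfl)).2
    ⟨x, y, z, hxy, hxz, hyz, orderOf_eq_six hx, orderOf_eq_six hy, orderOf_eq_six hz⟩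
  exact absurd this (by decide)

end Cyclic

end genNonCoprimeGraph

theorem clawFree_iff_general {G : Type*} [Group G] [Fintype G]
    (hG : IsCyclic G)
    (H : Subgroup G) (hH : H ≠ ⊥) :
    (¬ ∃ v a b c : {g : G // g ≠ 1}, a ≠ b ∧ a ≠ c ∧ b ≠ c ∧
        (genNonCoprimeGraph G H).Adj v a ∧ (genNonCoprimeGraph G H).Adj v b ∧
        (genNonCoprimeGraph G H).Adj v c ∧
        ¬ (genNonCoprimeGraph G H).Adj a b ∧ ¬ (genNonCoprimeGraph G H).Adj a c ∧
        ¬ (genNonCoprimeGraph G H).Adj b c) ↔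
      (H = ⊤ ∧ (Fintype.card G).primeFactors.card ≤ 2) ∨
      (H ≠ ⊤ ∧ (Fintype.card G = 4 ∨ Fintype.card G = 6)) := by
  change ¬ (genNonCoprimeGraph G H).HasClaw ↔ _
  rcases eq_or_ne H ⊤ with rfl | hT
  · rw [genNonCoprimeGraph.hasClaw_top_iff, Nat.card_eq_fintype_card]
    simp [Nat.lt_succ_iff]
  · simp only [hT, false_and, false_or, ne_eq, not_false_eq_true, true_and]
    refine ⟨fun h => ?_, ?_⟩
    · contrapose! h
      exact genNonCoprimeGraph.hasClaw_of_card_ne_four_of_card_ne_six hH hT h.1 h.2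
    · rintro (h4 | h6)
      · exact genNonCoprimeGraph.not_hasClaw_of_card_le_four h4.le
      · exact genNonCoprimeGraph.not_hasClaw_of_card_eq_six hH hT h6

theorem clawFree_iff {G : Type*} [Group G] [Fintype G]
    (hG : IsCyclic G) (hn : 3 ≤ Fintype.card G)
    (H : Subgroup G) (hH : H ≠ ⊥) :
    (¬ ∃ v a b c : {g : G // g ≠ 1}, a ≠ b ∧ a ≠ c ∧ b ≠ c ∧
        (genNonCoprimeGraph G H).Adj v a ∧ (genNonCoprimeGraph G H).Adj v b ∧
        (genNonCoprimeGraph G H).Adj v c ∧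
        ¬ (genNonCoprimeGraph G H).Adj a b ∧ ¬ (genNonCoprimeGraph G H).Adj a c ∧
        ¬ (genNonCoprimeGraph G H).Adj b c) ↔
      (H = ⊤ ∧ (Fintype.card G).primeFactors.card ≤ 2) ∨
      (H ≠ ⊤ ∧ (Fintype.card G = 4 ∨ Fintype.card G = 6)) :=
  clawFree_iff_general hG H hH
end

section
/- Let G be a cyclic group of order p₁p₂p₃p₄, a product of four distinct primes, and let H be the subgroup of order p₁p₂p₃. Then the generalized non-coprime graph Γ_{G,H} contains an induced 6-cycle, namely on elements of orders p₁, p₁p₂p₄, p₂, p₂p₃p₄, p₃, p₁p₃p₄. -/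
/-!
In a finite cyclic group an element lies in a subgroup `H` iff its order divides `|H|`, and there
is an element of every order dividing `|G|`. So when the orders involved are products of distinct
primes `∏_{i ∈ S} pᵢ`, adjacency in `Γ_{G,H}` depends only on the index sets: `S` and `S'` must
meet (non-coprime orders) and one of them must lie inside the index set `T` of `|H|`. Picking one
element of each such order embeds this finite "subset graph" into `Γ_{G,H}` as an induced
subgraph, and the six-cycle becomes a finite check on subsets of a four-element set.
-/

open Finset Function

theorem IsCyclic.mem_subgroup_iff_orderOf_dvd {G : Type*} [Group G] [Finite G] [IsCyclic G]
    (H : Subgroup G) {x : G} : x ∈ H ↔ orderOf x ∣ Nat.card H := by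
  classical
  cases nonempty_fintype G
  refine ⟨H.orderOf_dvd_natCard, fun hx => ?_⟩
  have hH : (H : Set G).toFinset ⊆ ({a | a ^ Nat.card H = 1} : Finset G) := fun y hy => by
    rw [mem_filter_univ, ← orderOf_dvd_iff_pow_eq_one]
    exact H.orderOf_dvd_natCard (Set.mem_toFinset.1 hy)
  have := eq_of_subset_of_card_le hH <| (IsCyclic.card_pow_eq_one_le Nat.card_pos).trans
    (by rw [Set.toFinset_card, Nat.card_eq_fintype_card]; rfl)
  rw [← SetLike.mem_coe, ← Set.mem_toFinset, this, mem_filter_univ]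
  exact orderOf_dvd_iff_pow_eq_one.1 hx

theorem IsCyclic.exists_orderOf_eq_of_dvd {G : Type*} [Group G] [Finite G] [IsCyclic G] {d : ℕ}
    (hd : d ∣ Nat.card G) : ∃ x : G, orderOf x = d := by
  obtain ⟨g, hg⟩ := IsCyclic.exists_ofOrder_eq_natCard (α := G)
  exact ⟨g ^ (orderOf g / d), orderOf_pow_orderOf_div (hg ▸ Nat.card_pos.ne') (hg ▸ hd)⟩

namespace Nat

variable {ι : Type*} {p : ι → ℕ} {s t : Finset ι}

theorem prod_primes_dvd_prod_primes_iff (hp : ∀ i, (p i).Prime) (hinj : Injective p) :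
    ∏ i ∈ s, p i ∣ ∏ i ∈ t, p i ↔ s ⊆ t := by
  classical
  refine ⟨fun h i hi => ?_, fun h => prod_dvd_prod_of_subset s t p h⟩
  obtain ⟨j, hj, hij⟩ := ((hp i).prime.dvd_finsetProd_iff _).1 ((dvd_prod_of_mem p hi).trans h)
  rwa [hinj ((prime_dvd_prime_iff_eq (hp i) (hp j)).1 hij)]

theorem coprime_prod_primes_iff_disjoint (hp : ∀ i, (p i).Prime) (hinj : Injective p) :
    Coprime (∏ i ∈ s, p i) (∏ i ∈ t, p i) ↔ Disjoint s t := by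
  simp only [coprime_prod_left_iff, coprime_prod_right_iff, coprime_primes (hp _) (hp _),
    hinj.ne_iff, Finset.disjoint_left]
  grind

end Nat

/-- `Γ_{G,H}` read on index sets: `S` stands for an element of order `∏_{i ∈ S} pᵢ`, and `T` for
the index set of `|H|`. -/
def subsetNonCoprimeGraph {ι : Type*} (T : Finset ι) :
    SimpleGraph {S : Finset ι // S.Nonempty} where
  Adj S S' := S ≠ S' ∧ ¬Disjoint S.1 S'.1 ∧ (S.1 ⊆ T ∨ S'.1 ⊆ T)
  symm := ⟨fun _ _ h => ⟨h.1.symm, disjoint_comm.not.1 h.2.1, h.2.2.symm⟩⟩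
  loopless := ⟨fun _ h => h.1 rfl⟩

instance {ι : Type*} [DecidableEq ι] (T : Finset ι) :
    DecidableRel (subsetNonCoprimeGraph T).Adj :=
  fun S S' => inferInstanceAs (Decidable (S ≠ S' ∧ ¬Disjoint S.1 S'.1 ∧ (S.1 ⊆ T ∨ S'.1 ⊆ T)))

theorem exists_embedding_subsetNonCoprimeGraph {G ι : Type*} [Group G] [Finite G] [IsCyclic G]
    [Fintype ι] {p : ι → ℕ} (hp : ∀ i, (p i).Prime) (hinj : Injective p)
    (hG : ∏ i, p i ∣ Nat.card G) (H : Subgroup G) {T : Finset ι}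
    (hH : Nat.card H = ∏ i ∈ T, p i) :
    ∃ φ : subsetNonCoprimeGraph T ↪g genNonCoprimeGraph G H,
      ∀ S, orderOf (φ S : G) = ∏ i ∈ S.1, p i := by
  have hdvd {s t : Finset ι} : ∏ i ∈ s, p i ∣ ∏ i ∈ t, p i ↔ s ⊆ t :=
    Nat.prod_primes_dvd_prod_primes_iff hp hinj
  choose x hx using fun S : Finset ι =>
    IsCyclic.exists_orderOf_eq_of_dvd ((prod_dvd_prod_of_subset _ _ p (subset_univ S)).trans hG)
  have hx_ne_one (S : {S : Finset ι // S.Nonempty}) : x S ≠ 1 := fun h =>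
    S.2.ne_empty <| subset_empty.1 <| hdvd.1 (by rw [← hx, h, orderOf_one, prod_empty])
  let v (S : {S : Finset ι // S.Nonempty}) : {g : G // g ≠ 1} := ⟨x S, hx_ne_one S⟩
  have hv_inj : Injective v := fun S S' h => by
    have h' : ∏ i ∈ S.1, p i = ∏ i ∈ S'.1, p i := by
      rw [← hx, ← hx]; exact congrArg (orderOf ∘ Subtype.val) h
    exact Subtype.ext <| (hdvd.1 h'.dvd).antisymm (hdvd.1 h'.symm.dvd)
  refine ⟨⟨⟨v, hv_inj⟩, fun {S S'} => ?_⟩, fun S => hx S⟩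
  show v S ≠ v S' ∧ ¬(orderOf (x S)).Coprime (orderOf (x S')) ∧ (x S ∈ H ∨ x S' ∈ H) ↔ _
  rw [IsCyclic.mem_subgroup_iff_orderOf_dvd, IsCyclic.mem_subgroup_iff_orderOf_dvd, hx, hx, hH,
    hv_inj.ne_iff, Nat.coprime_prod_primes_iff_disjoint hp hinj, hdvd, hdvd]
  rfl

theorem induced_six_cycle {G : Type*} [Group G] [Fintype G]
    (hG : IsCyclic G) (p₁ p₂ p₃ p₄ : ℕ)
    (hp₁ : p₁.Prime) (hp₂ : p₂.Prime) (hp₃ : p₃.Prime) (hp₄ : p₄.Prime)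
    (h12 : p₁ ≠ p₂) (h13 : p₁ ≠ p₃) (h14 : p₁ ≠ p₄)
    (h23 : p₂ ≠ p₃) (h24 : p₂ ≠ p₄) (h34 : p₃ ≠ p₄)
    (hcard : Fintype.card G = p₁ * p₂ * p₃ * p₄)
    (H : Subgroup G) (hH : Nat.card H = p₁ * p₂ * p₃) :
    ∃ a b c d e f : {g : G // g ≠ 1},
      orderOf (a : G) = p₁ ∧ orderOf (b : G) = p₁ * p₂ * p₄ ∧
      orderOf (c : G) = p₂ ∧ orderOf (d : G) = p₂ * p₃ * p₄ ∧
      orderOf (e : G) = p₃ ∧ orderOf (f : G) = p₁ * p₃ * p₄ ∧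
      (genNonCoprimeGraph G H).Adj a b ∧ (genNonCoprimeGraph G H).Adj b c ∧
      (genNonCoprimeGraph G H).Adj c d ∧ (genNonCoprimeGraph G H).Adj d e ∧
      (genNonCoprimeGraph G H).Adj e f ∧ (genNonCoprimeGraph G H).Adj f a ∧
      ¬ (genNonCoprimeGraph G H).Adj a c ∧ ¬ (genNonCoprimeGraph G H).Adj a d ∧
      ¬ (genNonCoprimeGraph G H).Adj a e ∧ ¬ (genNonCoprimeGraph G H).Adj b d ∧
      ¬ (genNonCoprimeGraph G H).Adj b e ∧ ¬ (genNonCoprimeGraph G H).Adj b f ∧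
      ¬ (genNonCoprimeGraph G H).Adj c e ∧ ¬ (genNonCoprimeGraph G H).Adj c f ∧
      ¬ (genNonCoprimeGraph G H).Adj d f := by
  have := hG
  let p : Fin 4 → ℕ := ![p₁, p₂, p₃, p₄]
  have hp : ∀ i, (p i).Prime := by
    intro i; fin_cases i <;> assumption
  have hinj : Function.Injective p := by
    intro i j h; fin_cases i <;> fin_cases j <;> simp_all [p, eq_comm]
  obtain ⟨φ, hφ⟩ := exists_embedding_subsetNonCoprimeGraph hp hinj
    (by simp [p, Fin.prod_univ_four, ← hcard, Nat.card_eq_fintype_card]) H (T := {0, 1, 2})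
    (by simp [p, hH, mul_assoc])
  refine ⟨φ ⟨{0}, by decide⟩, φ ⟨{0, 1, 3}, by decide⟩, φ ⟨{1}, by decide⟩,
    φ ⟨{1, 2, 3}, by decide⟩, φ ⟨{2}, by decide⟩, φ ⟨{0, 2, 3}, by decide⟩, ?_⟩
  simp only [hφ, φ.map_adj_iff]
  refine ⟨?_, ?_, ?_, ?_, ?_, ?_, by decide⟩ <;> simp [p, mul_assoc]
end

section
/- Let G be a nilpotent group of order n and H a subgroup of order m. Then the generalized non-coprime graph Γ_{G,H} is isomorphic to the generalized non-coprime graph Γ_{Z_n, Z_m}, where Z_m is the (unique up to conjugacy, existing since m | n) subgroup of order m of the cyclic group Z_n. -/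
/-!
Adjacency in the generalized non-coprime graph depends only on the set of primes dividing the
order of each vertex and on whether the vertex lies in the subgroup. So it suffices to find a
bijection `Z_n ≃ G` preserving both data, and such a bijection exists as soon as, for every set
`s` of primes, `Z_n` and `G` (and likewise `Z_m` and `H`) have equally many elements whose order
has exactly the prime divisors `s`. A finite nilpotent group is the direct product of its Sylow
subgroups, so its elements whose order has prime divisors inside `s` are those with trivial
`p`-component for every `p ∉ s`: there are `∏_{p ∈ s} p ^ v_p(|G|)` of them, a number depending
only on `|G|`, and the exact counts follow by inclusion–exclusion over the subsets of `s`.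
-/

open Finset

theorem Finset.eq_of_sum_powerset_eq {α M : Type*} [AddCancelCommMonoid M]
    {f g : Finset α → M} (h : ∀ s : Finset α, ∑ t ∈ s.powerset, f t = ∑ t ∈ s.powerset, g t) :
    f = g := by
  classical
  funext s
  induction s using Finset.strongInduction with
  | _ s ih =>
    have hs := h s
    rw [← add_sum_erase _ _ (mem_powerset_self s), ← add_sum_erase _ _ (mem_powerset_self s),
      sum_congr rfl fun t ht => ih t <| ssubset_iff_subset_ne.mpr
        ⟨mem_powerset.mp (mem_of_mem_erase ht), ne_of_mem_erase ht⟩] at hs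
    exact add_right_cancel hs

theorem Nat.card_subtype_subset_eq_sum_powerset {α β : Type*} [Finite α] (f : α → Finset β)
    (s : Finset β) : Nat.card {a // f a ⊆ s} = ∑ t ∈ s.powerset, Nat.card {a // f a = t} := by
  classical
  have := Fintype.ofFinite α
  simp only [Nat.card_eq_fintype_card, Fintype.card_subtype]
  rw [card_eq_sum_card_fiberwise (f := f) (t := s.powerset) fun a ha => by simpa using ha]
  refine sum_congr rfl fun t ht => ?_
  rw [filter_filter]
  exact congrArg card <| filter_congr fun a _ =>
    ⟨And.right, fun hat => ⟨hat ▸ mem_powerset.mp ht, hat⟩⟩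

theorem exists_equiv_forall_iff_of_card_eq {α β : Type*} [Finite α] [Finite β]
    {p : α → Prop} {q : β → Prop} (h : Nat.card α = Nat.card β)
    (hpq : Nat.card {a // p a} = Nat.card {b // q b}) :
    ∃ e : α ≃ β, ∀ a, q (e a) ↔ p a := by
  classical
  have hcompl : Nat.card {a // ¬p a} = Nat.card {b // ¬q b} := by
    have hα := Nat.card_congr (Equiv.sumCompl p)
    have hβ := Nat.card_congr (Equiv.sumCompl q)
    rw [Nat.card_sum] at hα hβ
    omega
  obtain ⟨e₁⟩ := Finite.card_eq.mp hpq
  obtain ⟨e₂⟩ := Finite.card_eq.mp hcompl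
  refine ⟨(Equiv.sumCompl p).symm.trans ((e₁.sumCongr e₂).trans (Equiv.sumCompl q)), fun a => ?_⟩
  by_cases ha : p a
  · simpa [Equiv.sumCompl_symm_apply_of_pos ha] using iff_of_true (e₁ ⟨a, ha⟩).2 ha
  · simpa [Equiv.sumCompl_symm_apply_of_neg ha] using iff_of_false (e₂ ⟨a, ha⟩).2 ha

theorem exists_equiv_forall_eq_and_iff {α β γ : Type*} [Finite α] [Finite β]
    {f : α → γ} {g : β → γ} {p : α → Prop} {q : β → Prop}
    (hf : ∀ c, Nat.card {a // f a = c} = Nat.card {b // g b = c})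
    (hp : ∀ c, Nat.card {a // f a = c ∧ p a} = Nat.card {b // g b = c ∧ q b}) :
    ∃ e : α ≃ β, ∀ a, g (e a) = f a ∧ (q (e a) ↔ p a) := by
  have hfiber : ∀ c, ∃ e : {a // f a = c} ≃ {b // g b = c}, ∀ a, q (e a) ↔ p a := fun c =>
    exists_equiv_forall_iff_of_card_eq (hf c) <| by
      rw [Nat.card_congr (Equiv.subtypeSubtypeEquivSubtypeInter _ fun a => p a),
        Nat.card_congr (Equiv.subtypeSubtypeEquivSubtypeInter _ fun b => q b), hp]
  choose e he using hfiber
  exact ⟨Equiv.ofFiberEquiv e, fun a => ⟨Equiv.ofFiberEquiv_map e a, he (f a) ⟨a, rfl⟩⟩⟩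

theorem Pi.primeFactors_orderOf_subset_iff {ι : Type*} [Fintype ι] {A : ι → Type*}
    [∀ i, Group (A i)] [∀ i, Finite (A i)] (x : ∀ i, A i) (s : Finset ℕ) :
    (orderOf x).primeFactors ⊆ s ↔ ∀ i, (orderOf (x i)).primeFactors ⊆ s := by
  refine ⟨fun h i => (Nat.primeFactors_mono (orderOf_apply_dvd_orderOf i)
    (orderOf_pos x).ne').trans h, fun h q hq => ?_⟩
  have hdvd : orderOf x ∣ ∏ i, orderOf (x i) :=
    orderOf_dvd_of_pow_eq_one <| funext fun i =>
      orderOf_dvd_iff_pow_eq_one.mp (dvd_prod_of_mem _ (mem_univ i))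
  obtain ⟨i, -, hqi⟩ := ((Nat.prime_of_mem_primeFactors hq).prime.dvd_finsetProd_iff _).mp
    ((Nat.dvd_of_mem_primeFactors hq).trans hdvd)
  exact h i (Nat.mem_primeFactors.mpr ⟨Nat.prime_of_mem_primeFactors hq, hqi, (orderOf_pos _).ne'⟩)

theorem Pi.card_primeFactors_orderOf_subset {ι : Type*} [Fintype ι] {A : ι → Type*}
    [∀ i, Group (A i)] [∀ i, Finite (A i)] (s : Finset ℕ) :
    Nat.card {x : ∀ i, A i // (orderOf x).primeFactors ⊆ s} =
      ∏ i, Nat.card {y : A i // (orderOf y).primeFactors ⊆ s} := by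
  rw [← Nat.card_pi]
  exact Nat.card_congr <| (Equiv.subtypeEquivRight fun x =>
    Pi.primeFactors_orderOf_subset_iff x s).trans
    (Equiv.subtypePiEquivPi (p := fun _ y => (orderOf y).primeFactors ⊆ s))

theorem IsPGroup.primeFactors_orderOf_subset_iff {p : ℕ} [Fact p.Prime] {G : Type*} [Group G]
    (hG : IsPGroup p G) (g : G) (s : Finset ℕ) :
    (orderOf g).primeFactors ⊆ s ↔ g = 1 ∨ p ∈ s := by
  obtain ⟨k, hk⟩ := IsPGroup.iff_orderOf.mp hG g
  rcases Nat.eq_zero_or_pos k with rfl | hk0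
  · simp_all [orderOf_eq_one_iff]
  · have hg : g ≠ 1 := by
      rintro rfl
      rw [orderOf_one] at hk
      exact (Nat.one_lt_pow hk0.ne' (Fact.out : p.Prime).one_lt).ne hk
    rw [hk, Nat.primeFactors_prime_pow hk0.ne' Fact.out]
    simp [hg]

theorem IsPGroup.card_primeFactors_orderOf_subset {p : ℕ} [Fact p.Prime] {G : Type*} [Group G]
    (hG : IsPGroup p G) (s : Finset ℕ) :
    Nat.card {g : G // (orderOf g).primeFactors ⊆ s} = if p ∈ s then Nat.card G else 1 := by
  simp_rw [hG.primeFactors_orderOf_subset_iff]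
  split_ifs with hp <;> simp [hp]

theorem Group.IsNilpotent.card_primeFactors_orderOf_subset {G : Type*} [Group G] [Finite G]
    [Group.IsNilpotent G] (s : Finset ℕ) :
    Nat.card {g : G // (orderOf g).primeFactors ⊆ s} =
      ∏ p ∈ (Nat.card G).primeFactors, if p ∈ s then p ^ (Nat.card G).factorization p else 1 := by
  let e := Sylow.directProductOfNormal (G := G) fun _ => inferInstance
  have he : Nat.card {g : G // (orderOf g).primeFactors ⊆ s} =
      Nat.card {x : ∀ p : (Nat.card G).primeFactors, ∀ P : Sylow p G, P //
        (orderOf x).primeFactors ⊆ s} :=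
    Nat.card_congr (e.toEquiv.subtypeEquiv fun x => by simp [MulEquiv.orderOf_eq]).symm
  rw [he, Pi.card_primeFactors_orderOf_subset, ← prod_coe_sort (Nat.card G).primeFactors]
  refine Fintype.prod_congr _ _ fun ⟨p, hp⟩ => ?_
  have : Fact p.Prime := ⟨Nat.prime_of_mem_primeFactors hp⟩
  obtain ⟨P⟩ : Nonempty (Sylow p G) := inferInstance
  have : Unique (Sylow p G) := Sylow.unique_of_normal P inferInstance
  rw [Pi.card_primeFactors_orderOf_subset, Fintype.prod_subsingleton _ P]
  exact (P.isPGroup'.card_primeFactors_orderOf_subset s).trans (by rw [P.card_eq_multiplicity])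

theorem Group.IsNilpotent.card_primeFactors_orderOf_eq_of_card_eq {G₁ G₂ : Type*}
    [Group G₁] [Finite G₁] [Group.IsNilpotent G₁] [Group G₂] [Finite G₂] [Group.IsNilpotent G₂]
    (h : Nat.card G₁ = Nat.card G₂) (s : Finset ℕ) :
    Nat.card {g : G₁ // (orderOf g).primeFactors = s} =
      Nat.card {g : G₂ // (orderOf g).primeFactors = s} := by
  refine congrFun (Finset.eq_of_sum_powerset_eq
    (f := fun s => Nat.card {g : G₁ // (orderOf g).primeFactors = s})
    (g := fun s => Nat.card {g : G₂ // (orderOf g).primeFactors = s}) fun s => ?_) s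
  rw [← Nat.card_subtype_subset_eq_sum_powerset, ← Nat.card_subtype_subset_eq_sum_powerset,
    card_primeFactors_orderOf_subset, card_primeFactors_orderOf_subset, h]

theorem Subgroup.card_primeFactors_orderOf_eq_and_mem {G : Type*} [Group G] (H : Subgroup G)
    (s : Finset ℕ) :
    Nat.card {g : G // (orderOf g).primeFactors = s ∧ g ∈ H} =
      Nat.card {h : H // (orderOf h).primeFactors = s} :=
  Nat.card_congr <| (Equiv.subtypeEquivRight fun _ => and_comm).trans
    ((Equiv.subtypeSubtypeEquivSubtypeInter (· ∈ H) _).symm.trans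
      (Equiv.subtypeEquivRight fun h => by rw [Subgroup.orderOf_coe]))

theorem primeFactors_orderOf_eq_empty_iff {G : Type*} [Group G] [Finite G] {g : G} :
    (orderOf g).primeFactors = ∅ ↔ g = 1 := by
  simp [(orderOf_pos g).ne']

theorem Group.IsNilpotent.exists_equiv_primeFactors_orderOf_mem {G₁ G₂ : Type*}
    [Group G₁] [Finite G₁] [Group.IsNilpotent G₁] [Group G₂] [Finite G₂] [Group.IsNilpotent G₂]
    {H₁ : Subgroup G₁} {H₂ : Subgroup G₂} (hG : Nat.card G₁ = Nat.card G₂)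
    (hH : Nat.card H₁ = Nat.card H₂) :
    ∃ e : G₁ ≃ G₂, ∀ g, (orderOf (e g)).primeFactors = (orderOf g).primeFactors ∧
      (e g ∈ H₂ ↔ g ∈ H₁) :=
  exists_equiv_forall_eq_and_iff (card_primeFactors_orderOf_eq_of_card_eq hG) fun s => by
    rw [H₁.card_primeFactors_orderOf_eq_and_mem, H₂.card_primeFactors_orderOf_eq_and_mem,
      card_primeFactors_orderOf_eq_of_card_eq hH]

theorem genNonCoprimeGraph_adj_iff {G : Type*} [Group G] [Finite G] {H : Subgroup G}
    {a b : {g : G // g ≠ 1}} :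
    (genNonCoprimeGraph G H).Adj a b ↔ a ≠ b ∧
      ¬Disjoint (orderOf (a : G)).primeFactors (orderOf (b : G)).primeFactors ∧
        ((a : G) ∈ H ∨ (b : G) ∈ H) := by
  rw [Nat.disjoint_primeFactors (orderOf_pos _).ne' (orderOf_pos _).ne']
  rfl

def genNonCoprimeGraph.isoOfEquiv {G G' : Type*} [Group G] [Group G'] [Finite G] [Finite G']
    {H : Subgroup G} {H' : Subgroup G'} (e : G ≃ G')
    (he : ∀ g, (orderOf (e g)).primeFactors = (orderOf g).primeFactors)
    (hH : ∀ g, e g ∈ H' ↔ g ∈ H) :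
    genNonCoprimeGraph G H ≃g genNonCoprimeGraph G' H' where
  toEquiv := e.subtypeEquiv fun g => not_congr <| by
    rw [← primeFactors_orderOf_eq_empty_iff, ← primeFactors_orderOf_eq_empty_iff (g := e g), he]
  map_rel_iff' {a b} := by
    simp only [genNonCoprimeGraph_adj_iff, Equiv.subtypeEquiv_apply, ne_eq, Subtype.ext_iff,
      e.apply_eq_iff_eq, he, hH]

theorem nilpotent_iso_cyclic {G : Type*} [Group G] [Fintype G]
    [Group.IsNilpotent G] (n m : ℕ) [NeZero n]
    (hn : Fintype.card G = n)
    (H : Subgroup G) (hm : Nat.card H = m)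
    (K : Subgroup (Multiplicative (ZMod n))) (hK : Nat.card K = m) :
    Nonempty (genNonCoprimeGraph (Multiplicative (ZMod n)) K ≃g
      genNonCoprimeGraph G H) := by
  have hcard : Nat.card (Multiplicative (ZMod n)) = Nat.card G := by
    simp [Nat.card_eq_fintype_card, hn]
  obtain ⟨e, he⟩ := Group.IsNilpotent.exists_equiv_primeFactors_orderOf_mem (H₁ := K) (H₂ := H)
    hcard (hK.trans hm.symm)
  exact ⟨genNonCoprimeGraph.isoOfEquiv e (fun g => (he g).1) fun g => (he g).2⟩
end

section
/- For a finite group G, the non-coprime graph Γ_G is connected if and only if the Gruenberg–Kegel graph of G is connected. -/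
/-- The non-coprime graph of a group: vertices are non-identity elements,
adjacent iff their orders are not coprime. -/
def nonCoprimeGraph (G : Type*) [Group G] : SimpleGraph {x : G // x ≠ 1} where
  Adj a b := a ≠ b ∧ Nat.gcd (orderOf (a : G)) (orderOf (b : G)) ≠ 1
  symm := by
    constructor
    intro a b h
    exact ⟨h.1.symm, by rw [Nat.gcd_comm]; exact h.2⟩
  loopless := by
    constructor
    intro a h
    exact h.1 rfl

/-- The Gruenberg--Kegel (prime) graph of a finite group: vertices are the prime
divisors of |G|, with p and q adjacent iff G has an element of order pq. -/
def gkGraph (G : Type*) [Group G] [Fintype G] :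
    SimpleGraph {p : ℕ // p.Prime ∧ p ∣ Fintype.card G} where
  Adj p q := (p : ℕ) ≠ (q : ℕ) ∧ ∃ g : G, orderOf g = (p : ℕ) * (q : ℕ)
  symm := by
    constructor
    intro p q h
    obtain ⟨h1, g, hg⟩ := h
    exact ⟨h1.symm, g, by rw [hg, mul_comm]⟩
  loopless := by
    constructor
    intro p h
    exact h.1 rfl

/-!
Send a non-identity element to the smallest prime divisor of its order, and a prime `p ∣ |G|` to
an element of order `p` (Cauchy). Two primes dividing the order `n` of one element are equal or
adjacent in the Gruenberg–Kegel graph, because `G` has elements of every order dividing `n`; so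
adjacent elements, which share a prime divisor of their orders, go to connected primes.
Conversely, an element of order `pq` links the chosen elements of orders `p` and `q`.
Both maps thus send edges to paths and meet every component, which transports connectedness.
-/

namespace SimpleGraph

variable {V W : Type*} {G : SimpleGraph V} {H : SimpleGraph W}

theorem Reachable.of_adj_reachable_map (f : V → W)
    (hf : ∀ ⦃u v⦄, G.Adj u v → H.Reachable (f u) (f v)) {u v : V} (huv : G.Reachable u v) :
    H.Reachable (f u) (f v) := by
  rw [reachable_iff_reflTransGen] at huv ⊢
  exact Relation.ReflTransGen.lift' f
    (fun _ _ h => (reachable_iff_reflTransGen _ _).1 (hf h)) u v huv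

theorem Connected.of_adj_reachable_map (hG : G.Connected) (f : V → W)
    (hf : ∀ ⦃u v⦄, G.Adj u v → H.Reachable (f u) (f v))
    (hsurj : ∀ w, ∃ v, H.Reachable (f v) w) : H.Connected := by
  refine (connected_iff H).2 ⟨fun w w' => ?_, hG.nonempty.map f⟩
  obtain ⟨v, hv⟩ := hsurj w
  obtain ⟨v', hv'⟩ := hsurj w'
  exact hv.symm.trans (((hG v v').of_adj_reachable_map f hf).trans hv')

end SimpleGraph

section

variable {G : Type*} [Group G]

theorem ne_one_of_prime_dvd_orderOf {g : G} {p : ℕ} (hp : p.Prime) (h : p ∣ orderOf g) :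
    g ≠ 1 := by
  rintro rfl
  exact hp.ne_one (Nat.dvd_one.1 (orderOf_one (G := G) ▸ h))

theorem nonCoprimeGraph_reachable_of_prime_dvd {x y : {x : G // x ≠ 1}} {p : ℕ} (hp : p.Prime)
    (hx : p ∣ orderOf (x : G)) (hy : p ∣ orderOf (y : G)) :
    (nonCoprimeGraph G).Reachable x y := by
  by_cases hxy : x = y
  · exact hxy ▸ .refl x
  · exact SimpleGraph.Adj.reachable
      ⟨hxy, fun h => hp.ne_one (Nat.dvd_one.1 (h ▸ Nat.dvd_gcd hx hy))⟩

variable [Fintype G]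

theorem gkGraph_reachable_of_dvd_orderOf (g : G)
    {p q : {p : ℕ // p.Prime ∧ p ∣ Fintype.card G}}
    (hp : (p : ℕ) ∣ orderOf g) (hq : (q : ℕ) ∣ orderOf g) :
    (gkGraph G).Reachable p q := by
  by_cases hpq : p = q
  · exact hpq ▸ .refl p
  have hpq' : (p : ℕ) ≠ q := fun h => hpq (Subtype.ext h)
  have hdvd : (p : ℕ) * q ∣ orderOf g :=
    ((Nat.coprime_primes p.2.1 q.2.1).2 hpq').mul_dvd_of_dvd_of_dvd hp hq
  exact SimpleGraph.Adj.reachable ⟨hpq', _, orderOf_pow_orderOf_div (orderOf_pos g).ne' hdvd⟩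

noncomputable def minFacOrderOf (x : {x : G // x ≠ 1}) :
    {p : ℕ // p.Prime ∧ p ∣ Fintype.card G} :=
  ⟨(orderOf (x : G)).minFac, Nat.minFac_prime (mt orderOf_eq_one_iff.1 x.2),
    (Nat.minFac_dvd _).trans orderOf_dvd_card⟩

noncomputable def cauchyElement (p : {p : ℕ // p.Prime ∧ p ∣ Fintype.card G}) :
    {x : G // x ≠ 1} :=
  have : Fact (p : ℕ).Prime := ⟨p.2.1⟩
  let h := exists_prime_orderOf_dvd_card (G := G) p p.2.2
  ⟨h.choose, ne_one_of_prime_dvd_orderOf p.2.1 (dvd_of_eq h.choose_spec.symm)⟩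

theorem orderOf_cauchyElement (p : {p : ℕ // p.Prime ∧ p ∣ Fintype.card G}) :
    orderOf (cauchyElement p : G) = p :=
  have : Fact (p : ℕ).Prime := ⟨p.2.1⟩
  (exists_prime_orderOf_dvd_card (G := G) p p.2.2).choose_spec

theorem minFacOrderOf_cauchyElement (p : {p : ℕ // p.Prime ∧ p ∣ Fintype.card G}) :
    minFacOrderOf (cauchyElement p) = p :=
  Subtype.ext (by simp only [minFacOrderOf, orderOf_cauchyElement, p.2.1.minFac_eq])

theorem gkGraph_reachable_minFacOrderOf_of_adj {x y : {x : G // x ≠ 1}}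
    (h : (nonCoprimeGraph G).Adj x y) :
    (gkGraph G).Reachable (minFacOrderOf x) (minFacOrderOf y) := by
  obtain ⟨r, hr, hrxy⟩ := Nat.exists_prime_and_dvd h.2
  have hrx : r ∣ orderOf (x : G) := hrxy.trans (Nat.gcd_dvd_left _ _)
  have hry : r ∣ orderOf (y : G) := hrxy.trans (Nat.gcd_dvd_right _ _)
  let r' : {p : ℕ // p.Prime ∧ p ∣ Fintype.card G} := ⟨r, hr, hrx.trans orderOf_dvd_card⟩
  exact (gkGraph_reachable_of_dvd_orderOf (q := r') (x : G) (Nat.minFac_dvd _) hrx).trans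
    (gkGraph_reachable_of_dvd_orderOf (y : G) hry (Nat.minFac_dvd _))

theorem nonCoprimeGraph_reachable_cauchyElement_of_adj
    {p q : {p : ℕ // p.Prime ∧ p ∣ Fintype.card G}} (h : (gkGraph G).Adj p q) :
    (nonCoprimeGraph G).Reachable (cauchyElement p) (cauchyElement q) := by
  obtain ⟨-, g, hg⟩ := h
  have hpg : (p : ℕ) ∣ orderOf g := hg ▸ dvd_mul_right _ _
  have hqg : (q : ℕ) ∣ orderOf g := hg ▸ dvd_mul_left _ _
  let g' : {x : G // x ≠ 1} := ⟨g, ne_one_of_prime_dvd_orderOf p.2.1 hpg⟩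
  exact (nonCoprimeGraph_reachable_of_prime_dvd (y := g') p.2.1
      (dvd_of_eq (orderOf_cauchyElement p).symm) hpg).trans
    (nonCoprimeGraph_reachable_of_prime_dvd q.2.1 hqg
      (dvd_of_eq (orderOf_cauchyElement q).symm))

theorem nonCoprimeGraph_reachable_cauchyElement_minFacOrderOf (x : {x : G // x ≠ 1}) :
    (nonCoprimeGraph G).Reachable (cauchyElement (minFacOrderOf x)) x :=
  nonCoprimeGraph_reachable_of_prime_dvd (minFacOrderOf x).2.1
    (dvd_of_eq (orderOf_cauchyElement _).symm) (Nat.minFac_dvd _)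

end

theorem nonCoprime_connected_iff_gk_connected_general {G : Type*} [Group G] [Fintype G] :
    (nonCoprimeGraph G).Connected ↔ (gkGraph G).Connected :=
  ⟨fun h => h.of_adj_reachable_map minFacOrderOf
      (fun _ _ => gkGraph_reachable_minFacOrderOf_of_adj)
      fun p => ⟨cauchyElement p, by rw [minFacOrderOf_cauchyElement]⟩,
    fun h => h.of_adj_reachable_map cauchyElement
      (fun _ _ => nonCoprimeGraph_reachable_cauchyElement_of_adj)
      fun x => ⟨minFacOrderOf x, nonCoprimeGraph_reachable_cauchyElement_minFacOrderOf x⟩⟩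

theorem nonCoprime_connected_iff_gk_connected {G : Type*} [Group G] [Fintype G]
    (hG : 1 < Fintype.card G) :
    (nonCoprimeGraph G).Connected ↔ (gkGraph G).Connected :=
  nonCoprime_connected_iff_gk_connected_general
end
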